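/- Let (Ω, 𝒜, μ) be a σ-finite measure space and let h : Ω → ℝ≥0 be measurable, and set ν = μ.withDensity h. Then the following are equivalent: (i) for every measurable f : Ω → ℂ, ∫⁻ ENNReal.ofReal (Real.log (1 + |f x|)) ∂μ < ∞ implies ∫⁻ ENNReal.ofReal (Real.log (1 + |f x|)) ∂ν < ∞; (ii) there exists a constant C with h x ≤ C for μ-almost every x. -/

import Mathlib

open MeasureTheory ENNReal
open scoped NNReal

/-!
If `h ≤ C` almost everywhere then `μ.withDensity h ≤ C • μ`. Otherwise every superlevel set
`{2ⁿ < h}` has positive measure and, by σ-finiteness, contains a set `Tₙ` with `0 < μ Tₙ < ∞`.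
The function `G = ∑ₙ 2⁻ⁿ 𝟙_{Tₙ} / μ Tₙ` then has `μ`-integral `∑ₙ 2⁻ⁿ < ∞`, while its `n`-th
summand alone has `μ.withDensity h`-integral at least `1`. Finally `f = exp G - 1` satisfies
`log (1 + |f|) = G` wherever `G` is finite: `μ`-a.e., hence also `μ.withDensity h`-a.e.
-/

section
variable {Ω : Type*} [MeasurableSpace Ω] {μ : Measure Ω}

theorem lintegral_withDensity_le_mul_of_ae_le {h : Ω → ℝ≥0∞} {C : ℝ≥0∞}
    (hC : ∀ᵐ x ∂μ, h x ≤ C) (g : Ω → ℝ≥0∞) :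
    ∫⁻ x, g x ∂μ.withDensity h ≤ C * ∫⁻ x, g x ∂μ := by
  have hle : μ.withDensity h ≤ C • μ := withDensity_const (μ := μ) C ▸ withDensity_mono hC
  calc ∫⁻ x, g x ∂μ.withDensity h ≤ ∫⁻ x, g x ∂(C • μ) := lintegral_mono' hle le_rfl
    _ = C * ∫⁻ x, g x ∂μ := lintegral_smul_measure C g

theorem mul_measure_le_withDensity_apply {h : Ω → ℝ≥0∞} {c : ℝ≥0∞} {s : Set Ω}
    (hs : MeasurableSet s) (hc : ∀ x ∈ s, c ≤ h x) : c * μ s ≤ μ.withDensity h s := by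
  rw [withDensity_apply h hs, ← setLIntegral_const]
  exact setLIntegral_mono' hs hc

theorem lintegral_tsum_indicator_const {ι : Type*} [Countable ι] {T : ι → Set Ω}
    (hT : ∀ i, MeasurableSet (T i)) (c : ι → ℝ≥0∞) :
    ∫⁻ x, ∑' i, (T i).indicator (fun _ => c i) x ∂μ = ∑' i, c i * μ (T i) := by
  rw [lintegral_tsum fun i => (measurable_const.indicator (hT i)).aemeasurable]
  exact tsum_congr fun i => lintegral_indicator_const (hT i) (c i)

theorem exists_lintegral_lt_top_and_lintegral_withDensity_eq_top [SigmaFinite μ]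
    {h : Ω → ℝ≥0∞} (hh : Measurable h) (hunb : ¬ ∃ C : ℝ≥0, ∀ᵐ x ∂μ, h x ≤ C) :
    ∃ G : Ω → ℝ≥0∞, Measurable G ∧ ∫⁻ x, G x ∂μ < ∞ ∧ ∫⁻ x, G x ∂μ.withDensity h = ∞ := by
  have hlevel : ∀ n : ℕ, 0 < μ {x | (2 : ℝ≥0∞) ^ n < h x} := by
    intro n
    rw [pos_iff_ne_zero, ← frequently_ae_iff]
    push Not at hunb
    simpa using hunb (2 ^ n)
  choose T hTm hTsub hTpos hTfin using fun n : ℕ =>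
    Measure.exists_subset_measure_lt_top (measurableSet_lt measurable_const hh) (hlevel n)
  set c : ℕ → ℝ≥0∞ := fun n => 2⁻¹ ^ n / μ (T n)
  refine ⟨fun x => ∑' n, (T n).indicator (fun _ => c n) x,
    Measurable.tsum fun n => measurable_const.indicator (hTm n), ?_, ?_⟩
  · have hterm : ∀ n, c n * μ (T n) = 2⁻¹ ^ n := fun n =>
      ENNReal.div_mul_cancel (hTpos n).ne' (hTfin n).ne
    rw [lintegral_tsum_indicator_const hTm, tsum_congr hterm, ENNReal.tsum_geometric,
      ENNReal.one_sub_inv_two, inv_inv]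
    exact ofNat_lt_top
  · have hterm : ∀ n, 1 ≤ c n * μ.withDensity h (T n) := fun n =>
      calc (1 : ℝ≥0∞) = c n * (2 ^ n * μ (T n)) := by
            rw [mul_comm (2 ^ n), ← mul_assoc, ENNReal.div_mul_cancel (hTpos n).ne' (hTfin n).ne,
              ← mul_pow, ENNReal.inv_mul_cancel two_ne_zero ofNat_ne_top, one_pow]
        _ ≤ c n * μ.withDensity h (T n) := by
            gcongr
            exact mul_measure_le_withDensity_apply (hTm n) fun x hx => (hTsub n hx).le
    rw [lintegral_tsum_indicator_const hTm, ← top_le_iff,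
      ← ENNReal.tsum_const_eq_top_of_ne_zero (α := ℕ) one_ne_zero]
    exact ENNReal.tsum_le_tsum hterm
end

theorem ofReal_log_one_add_norm_exp_sub_one {t : ℝ} (ht : 0 ≤ t) :
    ENNReal.ofReal (Real.log (1 + ‖((Real.exp t - 1 : ℝ) : ℂ)‖)) = ENNReal.ofReal t := by
  rw [Complex.norm_real, Real.norm_of_nonneg (sub_nonneg.mpr (Real.one_le_exp ht)),
    add_sub_cancel, Real.log_exp]

theorem loglog_subset_iff_bounded {Ω : Type*} [MeasurableSpace Ω]
    (μ : Measure Ω) [SigmaFinite μ] (h : Ω → NNReal) (hh : Measurable h) :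
    (∀ f : Ω → ℂ, Measurable f →
        ∫⁻ x, ENNReal.ofReal (Real.log (1 + ‖f x‖)) ∂μ < ∞ →
        ∫⁻ x, ENNReal.ofReal (Real.log (1 + ‖f x‖))
          ∂(μ.withDensity fun x => (h x : ENNReal)) < ∞) ↔
      ∃ C : NNReal, ∀ᵐ x ∂μ, h x ≤ C := by
  constructor
  · intro hlog
    by_contra hunb
    obtain ⟨G, hGm, hGμ, hGν⟩ := exists_lintegral_lt_top_and_lintegral_withDensity_eq_top
      hh.coe_nnreal_ennreal fun ⟨C, hC⟩ => hunb ⟨C, hC.mono fun _ => ENNReal.coe_le_coe.mp⟩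
    set f : Ω → ℂ := fun x => ((Real.exp (G x).toReal - 1 : ℝ) : ℂ)
    have hfG : (fun x => ENNReal.ofReal (Real.log (1 + ‖f x‖))) =ᵐ[μ] G := by
      filter_upwards [ae_lt_top hGm hGμ.ne] with x hx
      rw [ofReal_log_one_add_norm_exp_sub_one toReal_nonneg, ofReal_toReal hx.ne]
    have hfν := hlog f (by fun_prop) (by rwa [lintegral_congr_ae hfG])
    rw [lintegral_congr_ae ((withDensity_absolutelyContinuous _ _).ae_eq hfG), hGν] at hfν
    exact hfν.ne rfl
  · rintro ⟨C, hC⟩ f - hf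
    calc _ ≤ C * ∫⁻ x, ENNReal.ofReal (Real.log (1 + ‖f x‖)) ∂μ :=
          lintegral_withDensity_le_mul_of_ae_le (hC.mono fun _ => ENNReal.coe_le_coe.mpr) _
      _ < ∞ := mul_lt_top coe_lt_top hf
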